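/- arXiv:1711.00382 — 2 statements merged into one kernel-verified Lean document; each statement's English description precedes it below -/
import Mathlib

section
/- Let Σ₀, Σ₁ be symmetric positive semidefinite p×p matrices, γ > 0, and for i ∈ {0,1} let δ_i > 0 and T_i = (I_p + (γ/(1+γδ_i)) Σ_i)⁻¹. Suppose additionally (1/n) tr(Σ₁ T₁) ≤ δ₁/2 for some n. Then (2γ²/((1+γδ₀)(1+γδ₁))) · (1/n) tr(Σ₀ T₀ Σ₁ T₁) < 1. -/
/-!
Write `T = (1 + c • Σ)⁻¹` with `c > 0`. Then `Σ T = c⁻¹ (1 - T)`, and `T`, `Σ₁ T₁` are positive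
semidefinite, so `tr (Σ₀ T₀ Σ₁ T₁) = c₀⁻¹ (tr (Σ₁ T₁) - tr (T₀ Σ₁ T₁)) ≤ c₀⁻¹ tr (Σ₁ T₁)`.
With `c₀ = γ / (1 + γ δ₀)` and `(1/n) tr (Σ₁ T₁) ≤ δ₁ / 2` the left-hand side is then at most
`γ δ₁ / (1 + γ δ₁) < 1`.
-/

open scoped Matrix.Norms.L2Operator

namespace Matrix

open scoped ComplexOrder MatrixOrder

variable {ι 𝕜 : Type*} [RCLike 𝕜]

theorem PosSemidef.trace_mul_nonneg [Fintype ι] {A B : Matrix ι ι 𝕜} (hA : A.PosSemidef)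
    (hB : B.PosSemidef) : 0 ≤ (A * B).trace := by
  classical
  obtain ⟨C, rfl⟩ := CStarAlgebra.nonneg_iff_eq_star_mul_self.mp hB.nonneg
  rw [star_eq_conjTranspose, ← mul_assoc, trace_mul_comm, ← mul_assoc]
  exact (hA.mul_mul_conjTranspose_same C).trace_nonneg

theorem PosSemidef.posDef_one_add_smul [DecidableEq ι] {S : Matrix ι ι 𝕜} (hS : S.PosSemidef)
    {c : ℝ} (hc : 0 ≤ c) : (1 + c • S).PosDef :=
  PosDef.one.add_posSemidef (hS.smul hc)

variable [Fintype ι] [DecidableEq ι]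

theorem mul_inv_one_add_smul {K A : Type*} [Field K] [CommRing A] [Algebra K A]
    {S : Matrix ι ι A} {c : K} (hc : c ≠ 0) (hM : IsUnit (1 + c • S)) :
    S * (1 + c • S)⁻¹ = c⁻¹ • (1 - (1 + c • S)⁻¹) :=
  calc S * (1 + c • S)⁻¹ = c⁻¹ • ((1 + c • S - 1) * (1 + c • S)⁻¹) := by
        rw [add_sub_cancel_left, smul_mul_assoc, inv_smul_smul₀ hc]
    _ = c⁻¹ • (1 - (1 + c • S)⁻¹) := by
        rw [sub_mul, mul_nonsing_inv _ ((isUnit_iff_isUnit_det _).mp hM), one_mul]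

theorem PosSemidef.mul_inv_one_add_smul {S : Matrix ι ι 𝕜} (hS : S.PosSemidef) {c : ℝ}
    (hc : 0 ≤ c) : (S * (1 + c • S)⁻¹).PosSemidef := by
  have hM := hS.posDef_one_add_smul hc
  set M := 1 + c • S
  have hMS : (M * S).PosSemidef := by
    have hSS : (Sᴴ * S).PosSemidef := posSemidef_conjTranspose_mul_self S
    rw [hS.isHermitian.eq] at hSS
    simpa only [M, add_mul, one_mul, smul_mul_assoc] using hS.add (hSS.smul hc)
  have hcongr : S * M⁻¹ = (M⁻¹)ᴴ * (M * S) * M⁻¹ := by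
    rw [hM.inv.isHermitian.eq, ← mul_assoc,
      nonsing_inv_mul _ ((isUnit_iff_isUnit_det M).mp hM.isUnit), one_mul]
  rw [hcongr]
  exact hMS.conjTranspose_mul_mul_same _

theorem PosSemidef.trace_mul_inv_one_add_smul_mul_le {S B : Matrix ι ι 𝕜} (hS : S.PosSemidef)
    (hB : B.PosSemidef) {c : ℝ} (hc : 0 < c) :
    (S * (1 + c • S)⁻¹ * B).trace ≤ c⁻¹ • B.trace := by
  have hM := hS.posDef_one_add_smul hc.le
  rw [Matrix.mul_inv_one_add_smul hc.ne' hM.isUnit, smul_mul_assoc, sub_mul, one_mul,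
    trace_smul, trace_sub]
  exact smul_le_smul_of_nonneg_left (sub_le_self _ (hM.inv.posSemidef.trace_mul_nonneg hB))
    (inv_nonneg.mpr hc.le)

end Matrix

/-- With `T_i = (I + (γ/(1+γδ_i))Σ_i)⁻¹` and `(1/n) tr(Σ₁T₁) ≤ δ₁/2`,
`(2γ²/((1+γδ₀)(1+γδ₁))) (1/n) tr(Σ₀T₀Σ₁T₁) < 1`. -/
theorem trace_product_bound_lt_one {p : ℕ} (S0 S1 : Matrix (Fin p) (Fin p) ℝ)
    (hS0 : S0.PosSemidef) (hS1 : S1.PosSemidef)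
    (γ δ₀ δ₁ : ℝ) (hγ : 0 < γ) (hδ0 : 0 < δ₀) (hδ1 : 0 < δ₁)
    (n : ℝ) (hn : 0 < n)
    (htr : (1 / n) * (S1 * (1 + (γ / (1 + γ * δ₁)) • S1)⁻¹).trace ≤ δ₁ / 2) :
    (2 * γ ^ 2 / ((1 + γ * δ₀) * (1 + γ * δ₁)))
      * ((1 / n) * (S0 * (1 + (γ / (1 + γ * δ₀)) • S0)⁻¹
          * S1 * (1 + (γ / (1 + γ * δ₁)) • S1)⁻¹).trace) < 1 := by
  have hc₀ : 0 < γ / (1 + γ * δ₀) := by positivity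
  have hc₁ : 0 < γ / (1 + γ * δ₁) := by positivity
  have key := hS0.trace_mul_inv_one_add_smul_mul_le (hS1.mul_inv_one_add_smul hc₁.le) hc₀
  rw [smul_eq_mul, ← mul_assoc] at key
  calc 2 * γ ^ 2 / ((1 + γ * δ₀) * (1 + γ * δ₁))
        * ((1 / n) * (S0 * (1 + (γ / (1 + γ * δ₀)) • S0)⁻¹
          * S1 * (1 + (γ / (1 + γ * δ₁)) • S1)⁻¹).trace)
      ≤ 2 * γ ^ 2 / ((1 + γ * δ₀) * (1 + γ * δ₁))
        * ((1 / n) * ((γ / (1 + γ * δ₀))⁻¹ * (S1 * (1 + (γ / (1 + γ * δ₁)) • S1)⁻¹).trace)) := by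
        gcongr
    _ = 2 * γ / (1 + γ * δ₁) * ((1 / n) * (S1 * (1 + (γ / (1 + γ * δ₁)) • S1)⁻¹).trace) := by
        field_simp
    _ ≤ 2 * γ / (1 + γ * δ₁) * (δ₁ / 2) := by gcongr
    _ = γ * δ₁ / (1 + γ * δ₁) := by ring
    _ < 1 := by
        rw [div_lt_one (by positivity)]
        linarith
end

section
/- Let Σ be symmetric positive semidefinite p×p with ‖Σ‖ ≤ K, γ > 0, and n ≥ 1. Then the map δ ↦ (1/n) tr( Σ (I_p + (γ/(1+γδ)) Σ)⁻¹ ) from [0, ∞) to [0, ∞) has a unique fixed point δ* ≥ 0, i.e. there is a unique δ* ≥ 0 with δ* = (1/n) tr(Σ (I_p + (γ/(1+γδ*)) Σ)⁻¹). -/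
open scoped Matrix.Norms.L2Operator

/-!
Diagonalising `Σ` with eigenvalues `λᵢ ≥ 0` turns the map into
`F(δ) = (1/n) ∑ᵢ λᵢ / (1 + γλᵢ/(1+γδ))`, which is continuous with `0 ≤ F ≤ (1/n) ∑ᵢ λᵢ`, so it
has a fixed point in `[0, (1/n) ∑ᵢ λᵢ]`. Dividing the equation `δ = F(δ)` by `1 + γδ` gives
`δ/(1+γδ) = (1/n) ∑ᵢ λᵢ/(1+γδ+γλᵢ)`, whose left side is strictly increasing and whose right side
is antitone in `δ`, so the fixed point is unique.
-/

open Set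

theorem StrictMonoOn.subsingleton_setOf_eq_of_antitoneOn {α β : Type*} [LinearOrder α]
    [PartialOrder β] {f g : α → β} {s : Set α} (hf : StrictMonoOn f s) (hg : AntitoneOn g s) :
    {x ∈ s | f x = g x}.Subsingleton := by
  rintro x ⟨hx, hfgx⟩ y ⟨hy, hfgy⟩
  by_contra hne
  rcases lt_or_gt_of_ne hne with hlt | hlt
  · exact (hfgx ▸ hfgy ▸ hf hx hy hlt).not_ge (hg hx hy hlt.le)
  · exact (hfgx ▸ hfgy ▸ hf hy hx hlt).not_ge (hg hy hx hlt.le)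

theorem strictMonoOn_div_one_add_mul {γ : ℝ} (hγ : 0 ≤ γ) :
    StrictMonoOn (fun δ => δ / (1 + γ * δ)) (Ici 0) := by
  intro x hx y hy hxy
  have hx' : (0 : ℝ) ≤ x := hx
  have hy' : (0 : ℝ) ≤ y := hy
  rw [div_lt_div_iff₀ (by positivity) (by positivity)]
  linarith

theorem Matrix.IsHermitian.trace_cfc {n 𝕜 : Type*} [Fintype n] [DecidableEq n] [RCLike 𝕜]
    {A : Matrix n n 𝕜} (hA : A.IsHermitian) (f : ℝ → ℝ) :
    (cfc f A).trace = ∑ i, (f (hA.eigenvalues i) : 𝕜) := by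
  rw [hA.cfc_eq, IsHermitian.cfc, Unitary.conjStarAlgAut_apply, trace_mul_cycle,
    Unitary.coe_star_mul_self, one_mul, trace_diagonal]
  rfl

theorem Matrix.PosSemidef.mul_inv_one_add_smul_eq_cfc {n : Type*} [Fintype n] [DecidableEq n]
    {S : Matrix n n ℝ} (hS : S.PosSemidef) {c : ℝ} (hc : 0 ≤ c) :
    S * (1 + c • S)⁻¹ = cfc (fun x => x / (1 + c * x)) S := by
  have hSa : IsSelfAdjoint S := hS.1
  have hspec : ∀ x ∈ spectrum ℝ S, 1 + c * x ≠ 0 := by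
    rw [hS.1.spectrum_real_eq_range_eigenvalues]
    rintro _ ⟨i, rfl⟩
    have := hS.eigenvalues_nonneg i
    positivity
  have hcont : ContinuousOn (fun x => (1 + c * x)⁻¹) (spectrum ℝ S) :=
    (continuousOn_const.add (continuousOn_const.mul continuousOn_id)).inv₀ hspec
  simp_rw [div_eq_mul_inv]
  rw [cfc_mul (fun x => x) (fun x => (1 + c * x)⁻¹) S (hg := hcont),
    cfc_inv (fun x => 1 + c * x) S hspec, cfc_id' ℝ S, cfc_const_add 1 (fun x => c * x) S,
    cfc_const_mul_id c S, map_one, nonsing_inv_eq_ringInverse]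

theorem Matrix.PosSemidef.trace_mul_inv_one_add_smul {n : Type*} [Fintype n] [DecidableEq n]
    {S : Matrix n n ℝ} (hS : S.PosSemidef) {c : ℝ} (hc : 0 ≤ c) :
    (S * (1 + c • S)⁻¹).trace = ∑ i, hS.1.eigenvalues i / (1 + c * hS.1.eigenvalues i) := by
  rw [hS.mul_inv_one_add_smul_eq_cfc hc, hS.1.trace_cfc]
  rfl

/-- The map `δ ↦ a · tr(Σ(1 + (γ/(1+γδ))Σ)⁻¹)` in terms of the eigenvalues `lam` of `Σ`. -/
noncomputable def resolventTrace {ι : Type*} [Fintype ι] (lam : ι → ℝ) (a γ δ : ℝ) : ℝ :=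
  a * ∑ i, lam i / (1 + γ / (1 + γ * δ) * lam i)

section resolventTrace

variable {ι : Type*} [Fintype ι] {lam : ι → ℝ} {a γ : ℝ}

theorem resolventTrace_div_one_add_mul {δ : ℝ} (hδ : 1 + γ * δ ≠ 0) :
    resolventTrace lam a γ δ / (1 + γ * δ) = a * ∑ i, lam i / (1 + γ * δ + γ * lam i) := by
  rw [resolventTrace, mul_div_assoc, Finset.sum_div]
  congr 1
  refine Finset.sum_congr rfl fun i _ => ?_
  rw [div_div]
  congr 1
  field_simp

theorem antitoneOn_resolventTrace_div (hlam : ∀ i, 0 ≤ lam i) (ha : 0 ≤ a) (hγ : 0 ≤ γ) :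
    AntitoneOn (fun δ => resolventTrace lam a γ δ / (1 + γ * δ)) (Ici 0) := by
  intro x hx y hy hxy
  have hx' : (0 : ℝ) ≤ x := hx
  have hy' : (0 : ℝ) ≤ y := hy
  simp only
  rw [resolventTrace_div_one_add_mul (by positivity),
    resolventTrace_div_one_add_mul (by positivity)]
  gcongr with i
  · exact hlam i
  · have := hlam i
    positivity

theorem resolventTrace_nonneg (hlam : ∀ i, 0 ≤ lam i) (ha : 0 ≤ a) (hγ : 0 ≤ γ) {δ : ℝ}
    (hδ : 0 ≤ δ) : 0 ≤ resolventTrace lam a γ δ := by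
  refine mul_nonneg ha (Finset.sum_nonneg fun i _ => ?_)
  have := hlam i
  positivity

theorem resolventTrace_le (hlam : ∀ i, 0 ≤ lam i) (ha : 0 ≤ a) (hγ : 0 ≤ γ) {δ : ℝ}
    (hδ : 0 ≤ δ) : resolventTrace lam a γ δ ≤ a * ∑ i, lam i := by
  refine mul_le_mul_of_nonneg_left (Finset.sum_le_sum fun i _ => ?_) ha
  have := hlam i
  exact div_le_self this (le_add_of_nonneg_right (by positivity))

theorem continuousOn_resolventTrace (hlam : ∀ i, 0 ≤ lam i) (hγ : 0 ≤ γ) :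
    ContinuousOn (resolventTrace lam a γ) (Ici 0) := by
  intro δ hδ
  have hδ' : (0 : ℝ) ≤ δ := hδ
  have h₁ : 1 + γ * δ ≠ 0 := by positivity
  have h₂ : ∀ i, 1 + γ / (1 + γ * δ) * lam i ≠ 0 := fun i => by
    have := hlam i
    positivity
  refine ContinuousAt.continuousWithinAt ?_
  unfold resolventTrace
  fun_prop (disch := first | exact h₁ | exact h₂ _)

theorem existsUnique_eq_resolventTrace (hlam : ∀ i, 0 ≤ lam i) (ha : 0 ≤ a) (hγ : 0 ≤ γ) :
    ∃! δ, 0 ≤ δ ∧ δ = resolventTrace lam a γ δ := by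
  have hM : 0 ≤ a * ∑ i, lam i := mul_nonneg ha (Finset.sum_nonneg fun i _ => hlam i)
  obtain ⟨δ, hδ, hfix⟩ := exists_mem_Icc_isFixedPt
    ((continuousOn_resolventTrace hlam hγ).mono Icc_subset_Ici_self) hM
    (resolventTrace_nonneg hlam ha hγ le_rfl) (resolventTrace_le hlam ha hγ hM)
  refine ⟨δ, ⟨hδ.1, hfix.symm⟩, fun δ' hδ' => ?_⟩
  exact (strictMonoOn_div_one_add_mul hγ).subsingleton_setOf_eq_of_antitoneOn
    (antitoneOn_resolventTrace_div hlam ha hγ)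
    ⟨hδ'.1, congrArg (· / _) hδ'.2⟩ ⟨hδ.1, congrArg (· / _) hfix.symm⟩

end resolventTrace

theorem fixed_point_unique_general {p : ℕ} (S : Matrix (Fin p) (Fin p) ℝ)
    (hS : S.PosSemidef)
    (γ : ℝ) (hγ : 0 < γ) (n : ℕ) :
    ∃! δ : ℝ, 0 ≤ δ ∧
      δ = (1 / (n : ℝ)) * (S * (1 + (γ / (1 + γ * δ)) • S)⁻¹).trace := by
  have htrace : ∀ δ : ℝ, 0 ≤ δ → (1 / (n : ℝ)) * (S * (1 + (γ / (1 + γ * δ)) • S)⁻¹).trace =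
      resolventTrace hS.1.eigenvalues (1 / n) γ δ := fun δ hδ => by
    rw [hS.trace_mul_inv_one_add_smul (by positivity), resolventTrace]
  refine (existsUnique_congr fun δ => ?_).2 <|
    existsUnique_eq_resolventTrace hS.eigenvalues_nonneg (a := 1 / n) (by positivity) hγ.le
  exact and_congr_right fun hδ => by rw [htrace δ hδ]

/-- The fixed-point equation `δ = (1/n) tr(Σ(I + (γ/(1+γδ))Σ)⁻¹)` has a unique
nonnegative solution. -/
theorem fixed_point_unique {p : ℕ} (S : Matrix (Fin p) (Fin p) ℝ)
    (hS : S.PosSemidef) (K : ℝ) (hK : ‖S‖ ≤ K)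
    (γ : ℝ) (hγ : 0 < γ) (n : ℕ) (hn : 1 ≤ n) :
    ∃! δ : ℝ, 0 ≤ δ ∧
      δ = (1 / (n : ℝ)) * (S * (1 + (γ / (1 + γ * δ)) • S)⁻¹).trace :=
  fixed_point_unique_general S hS γ hγ n
end
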